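/- A sum of kernels is a kernel: if K_1 and K_2 are symmetric positive semi-definite functions Z × Z → ℝ, then so is K_1 + K_2; moreover, a pointwise limit of symmetric positive semi-definite functions is symmetric positive semi-definite. Consequently, the Volterra kernel K(z,z') = 1 + Σ_{τ=1}^∞ λ^{2τ} Π_{t=0}^{τ−1} (1 − θ²⟨z_{−t}, z'_{−t}⟩)^{-1}, being a convergent sum of products of positive semi-definite kernels, is itself symmetric and positive semi-definite on K_M. -/

import Mathlib

open scoped RealInnerProductSpace

/-!
A function is a positive semi-definite kernel iff all its Gram matrices are positive
semi-definite, so the Schur product theorem for matrices makes pointwise products of kernels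
kernels, while sums and pointwise limits of kernels are kernels because the defining quadratic
forms stay nonnegative. On `K_M` the kernel `θ²⟨z_{-t}, z'_{-t}⟩` has modulus at most
`θ²M² < 1`, so `(1 - θ²⟨z_{-t}, z'_{-t}⟩)⁻¹` is the sum of its geometric series, a limit of
kernels. The `τ`-th term of the Volterra series is then dominated by `(λ² / (1 - θ²M²))^(τ+1)`,
which is summable because `λ² < 1 - θ²M²`.
-/

/-- A symmetric positive semi-definite kernel on a set `Z`. -/
def IsPSDKernel {Z : Type*} (K : Z → Z → ℝ) : Prop :=
  (∀ z z', K z z' = K z' z) ∧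
    ∀ (n : ℕ) (z : Fin n → Z) (α : Fin n → ℝ),
      0 ≤ ∑ i, ∑ j, α i * α j * K (z i) (z j)

/-- The Volterra kernel; `z t` stands for the entry `z_{-t}` of a semi-infinite sequence. -/
noncomputable def volterraK (d : ℕ) (θ lam : ℝ) (z z' : ℕ → EuclideanSpace ℝ (Fin d)) : ℝ :=
  1 + ∑' τ : ℕ, lam ^ (2 * (τ + 1)) *
    ∏ t ∈ Finset.range (τ + 1), (1 - θ ^ 2 * ⟪z t, z' t⟫)⁻¹

theorem isPSDKernel_iff_posSemidef {Z : Type*} {K : Z → Z → ℝ} :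
    IsPSDKernel K ↔ (∀ z z', K z z' = K z' z) ∧
      ∀ (n : ℕ) (z : Fin n → Z), (Matrix.of fun i j => K (z i) (z j)).PosSemidef := by
  refine and_congr_right fun hsymm => forall_congr' fun n => forall_congr' fun z => ?_
  have hherm : (Matrix.of fun i j => K (z i) (z j)).IsHermitian := by
    ext i j
    simp [hsymm (z j) (z i)]
  simp only [Matrix.posSemidef_iff_dotProduct_mulVec, hherm, true_and, dotProduct,
    Matrix.mulVec, Matrix.of_apply, star_trivial, Finset.mul_sum]
  exact forall_congr' fun α => iff_of_eq <| congrArg _ <|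
    Finset.sum_congr rfl fun i _ => Finset.sum_congr rfl fun j _ => by ring

namespace IsPSDKernel

variable {Z : Type*} {K K₁ K₂ : Z → Z → ℝ}

theorem add (h₁ : IsPSDKernel K₁) (h₂ : IsPSDKernel K₂) :
    IsPSDKernel fun z z' => K₁ z z' + K₂ z z' := by
  refine ⟨fun z z' => congrArg₂ (· + ·) (h₁.1 z z') (h₂.1 z z'), fun n z α => ?_⟩
  simpa only [mul_add, Finset.sum_add_distrib] using add_nonneg (h₁.2 n z α) (h₂.2 n z α)

theorem mul (h₁ : IsPSDKernel K₁) (h₂ : IsPSDKernel K₂) :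
    IsPSDKernel fun z z' => K₁ z z' * K₂ z z' := by
  rw [isPSDKernel_iff_posSemidef] at *
  exact ⟨fun z z' => congrArg₂ (· * ·) (h₁.1 z z') (h₂.1 z z'),
    fun n z => (h₁.2 n z).hadamard (h₂.2 n z)⟩

theorem const {c : ℝ} (hc : 0 ≤ c) : IsPSDKernel fun _ _ : Z => c := by
  refine ⟨fun _ _ => rfl, fun n z α => ?_⟩
  have hsq : ∑ i, ∑ j, α i * α j * c = (∑ i, α i) ^ 2 * c := by
    rw [sq, Finset.sum_mul_sum, Finset.sum_mul]
    simp only [Finset.sum_mul]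
  rw [hsq]
  positivity

theorem inner {E : Type*} [NormedAddCommGroup E] [InnerProductSpace ℝ E] (f : Z → E) :
    IsPSDKernel fun z z' => ⟪f z, f z'⟫ := by
  refine ⟨fun z z' => real_inner_comm _ _, fun n z α => ?_⟩
  have hgram : ∑ i, ∑ j, α i * α j * ⟪f (z i), f (z j)⟫ =
      ⟪∑ i, α i • f (z i), ∑ j, α j • f (z j)⟫ := by
    simp only [sum_inner, inner_sum, real_inner_smul_left, real_inner_smul_right]
    rw [Finset.sum_comm]
    exact Finset.sum_congr rfl fun i _ => Finset.sum_congr rfl fun j _ => by ring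
  rw [hgram]
  exact real_inner_self_nonneg

theorem sum {ι : Type*} (s : Finset ι) {K : ι → Z → Z → ℝ}
    (hK : ∀ i ∈ s, IsPSDKernel (K i)) : IsPSDKernel fun z z' => ∑ i ∈ s, K i z z' := by
  convert Finset.sum_induction K IsPSDKernel (fun _ _ => add) (const le_rfl) hK using 1
  funext z z'
  simp only [Finset.sum_apply]

theorem prod {ι : Type*} (s : Finset ι) {K : ι → Z → Z → ℝ}
    (hK : ∀ i ∈ s, IsPSDKernel (K i)) : IsPSDKernel fun z z' => ∏ i ∈ s, K i z z' := by
  convert Finset.prod_induction K IsPSDKernel (fun _ _ => mul) (const zero_le_one) hK using 1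
  funext z z'
  simp only [Finset.prod_apply]

theorem pow (hK : IsPSDKernel K) (k : ℕ) : IsPSDKernel fun z z' => K z z' ^ k := by
  simpa only [Finset.prod_const, Finset.card_range] using
    prod (Finset.range k) fun _ _ => hK

theorem of_tendsto {K : ℕ → Z → Z → ℝ} {Klim : Z → Z → ℝ} (hK : ∀ m, IsPSDKernel (K m))
    (hlim : ∀ z z', Filter.Tendsto (fun m => K m z z') Filter.atTop (nhds (Klim z z'))) :
    IsPSDKernel Klim := by
  refine ⟨fun z z' => tendsto_nhds_unique (hlim z z') ?_, fun n z α => ?_⟩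
  · simpa only [(hK _).1 z' z] using hlim z' z
  · have hquad : Filter.Tendsto (fun m => ∑ i, ∑ j, α i * α j * K m (z i) (z j)) Filter.atTop
        (nhds (∑ i, ∑ j, α i * α j * Klim (z i) (z j))) :=
      tendsto_finsetSum _ fun i _ => tendsto_finsetSum _ fun j _ =>
        (hlim (z i) (z j)).const_mul _
    exact ge_of_tendsto' hquad fun m => (hK m).2 n z α

theorem tsum {K : ℕ → Z → Z → ℝ} (hK : ∀ m, IsPSDKernel (K m))
    (hsum : ∀ z z', Summable fun m => K m z z') : IsPSDKernel fun z z' => ∑' m, K m z z' :=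
  of_tendsto (fun m => sum (Finset.range m) fun k _ => hK k)
    fun z z' => (hsum z z').tendsto_sum_tsum_nat

theorem inv_one_sub (hK : IsPSDKernel K) (hlt : ∀ z z', |K z z'| < 1) :
    IsPSDKernel fun z z' => (1 - K z z')⁻¹ := by
  simpa only [tsum_geometric_of_abs_lt_one (hlt _ _)] using
    tsum (pow hK) fun z z' => summable_geometric_of_abs_lt_one (hlt z z')

end IsPSDKernel

section Volterra

variable {E : Type*} [NormedAddCommGroup E] [InnerProductSpace ℝ E]

theorem abs_sq_mul_inner_le {θ M : ℝ} {x y : E} (hx : ‖x‖ ≤ M) (hy : ‖y‖ ≤ M) :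
    |θ ^ 2 * ⟪x, y⟫| ≤ θ ^ 2 * M ^ 2 := by
  rw [abs_mul, abs_sq, sq M]
  gcongr
  exact (abs_real_inner_le_norm x y).trans
    (mul_le_mul hx hy (norm_nonneg _) ((norm_nonneg _).trans hx))

theorem isPSDKernel_inv_one_sub_sq_mul_inner {Z : Type*} {θ M : ℝ} (f : Z → E)
    (hf : ∀ z, ‖f z‖ ≤ M) (hθM : θ ^ 2 * M ^ 2 < 1) :
    IsPSDKernel fun z z' => (1 - θ ^ 2 * ⟪f z, f z'⟫)⁻¹ :=
  ((IsPSDKernel.const (sq_nonneg θ)).mul (IsPSDKernel.inner f)).inv_one_sub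
    fun z z' => (abs_sq_mul_inner_le (hf z) (hf z')).trans_lt hθM

theorem summable_pow_mul_prod_inv_one_sub {a : ℕ → ℝ} {c lam : ℝ} (ha : ∀ t, |a t| ≤ c)
    (hlam : lam ^ 2 < 1 - c) :
    Summable fun τ : ℕ => lam ^ (2 * (τ + 1)) * ∏ t ∈ Finset.range (τ + 1), (1 - a t)⁻¹ := by
  have h1c : 0 < 1 - c := (sq_nonneg lam).trans_lt hlam
  have hle : ∀ t, a t ≤ c := fun t => (le_abs_self _).trans (ha t)
  have hpos : ∀ t, 0 < 1 - a t := fun t => h1c.trans_le (by linarith [hle t])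
  have hlam_pow : ∀ τ : ℕ, 0 ≤ lam ^ (2 * (τ + 1)) := fun τ => (even_two_mul _).pow_nonneg lam
  set r := lam ^ 2 * (1 - c)⁻¹
  have hr0 : 0 ≤ r := by positivity
  have hr1 : r < 1 := (mul_inv_lt_iff₀ h1c).2 (by rwa [one_mul])
  refine Summable.of_nonneg_of_le (fun τ => ?_) (fun τ => ?_)
    ((summable_geometric_of_lt_one hr0 hr1).mul_left r)
  · exact mul_nonneg (hlam_pow τ) (Finset.prod_nonneg fun t _ => (inv_pos.2 (hpos t)).le)
  · calc lam ^ (2 * (τ + 1)) * ∏ t ∈ Finset.range (τ + 1), (1 - a t)⁻¹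
        ≤ lam ^ (2 * (τ + 1)) * ∏ t ∈ Finset.range (τ + 1), (1 - c)⁻¹ := by
          gcongr with t
          · exact hlam_pow τ
          · exact fun t _ => (inv_pos.2 (hpos t)).le
          · exact hle t
      _ = r * r ^ τ := by rw [Finset.prod_const, Finset.card_range, pow_mul, ← mul_pow, pow_succ']

theorem isPSDKernel_volterraK {d : ℕ} {M θ lam : ℝ} (hlam : lam ^ 2 < 1 - θ ^ 2 * M ^ 2) :
    IsPSDKernel fun z z' : {z : ℕ → EuclideanSpace ℝ (Fin d) // ∀ t, ‖z t‖ ≤ M} =>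
      volterraK d θ lam z.1 z'.1 := by
  have hθM : θ ^ 2 * M ^ 2 < 1 := by linarith [sq_nonneg lam]
  refine (IsPSDKernel.const zero_le_one).add (IsPSDKernel.tsum (fun τ => ?_) fun z z' => ?_)
  · exact (IsPSDKernel.const ((even_two_mul _).pow_nonneg lam)).mul <|
      IsPSDKernel.prod _ fun t _ => isPSDKernel_inv_one_sub_sq_mul_inner _ (fun z => z.2 t) hθM
  · exact summable_pow_mul_prod_inv_one_sub (fun t => abs_sq_mul_inner_le (z.2 t) (z'.2 t)) hlam

end Volterra

/-- Sums of kernels are kernels, pointwise limits of kernels are kernels, and consequently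
the Volterra kernel is symmetric and positive semi-definite on `K_M`. -/
theorem stmt_16 :
    (∀ (Z : Type) (K₁ K₂ : Z → Z → ℝ), IsPSDKernel K₁ → IsPSDKernel K₂ →
      IsPSDKernel (fun z z' => K₁ z z' + K₂ z z')) ∧
    (∀ (Z : Type) (K : ℕ → Z → Z → ℝ) (Klim : Z → Z → ℝ),
      (∀ m, IsPSDKernel (K m)) →
      (∀ z z', Filter.Tendsto (fun m => K m z z') Filter.atTop (nhds (Klim z z'))) →
      IsPSDKernel Klim) ∧
    (∀ (d : ℕ) (M θ lam : ℝ), 0 < M → 0 < θ → θ ^ 2 * M ^ 2 < 1 → 0 < lam →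
      lam < Real.sqrt (1 - θ ^ 2 * M ^ 2) →
      IsPSDKernel (fun z z' : {z : ℕ → EuclideanSpace ℝ (Fin d) // ∀ t, ‖z t‖ ≤ M} =>
        volterraK d θ lam z.1 z'.1)) := by
  refine ⟨fun _ _ _ => IsPSDKernel.add, fun _ _ _ => IsPSDKernel.of_tendsto, ?_⟩
  intro d M θ lam _ _ _ hlam hlt
  exact isPSDKernel_volterraK ((Real.lt_sqrt hlam.le).1 hlt)
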